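/- Let n ≥ 3 and N = 2^{n-2}. With D = diag(exp(2πi·5^k/2^n))_{k=0}^{N−1} and S the N×N cyclic shift matrix, the set {D^k S^ℓ : 0 ≤ k, ℓ ≤ N−1} consists of N² pairwise orthogonal unitary matrices with respect to the trace inner product ⟨A,B⟩ = tr(A†B)/N, and hence is a basis of M_N(ℂ). -/

import Mathlib

open Matrix

noncomputable def Dmat (n : ℕ) : Matrix (Fin (2 ^ (n - 2))) (Fin (2 ^ (n - 2))) ℂ :=
  Matrix.diagonal (fun k => Complex.exp (2 * Real.pi * Complex.I * 5 ^ (k : ℕ) / 2 ^ n))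

noncomputable def Smat (n : ℕ) : Matrix (Fin (2 ^ (n - 2))) (Fin (2 ^ (n - 2))) ℂ :=
  fun i j => if i = j + 1 then 1 else 0

noncomputable def DSfam (n : ℕ) :
    Fin (2 ^ (n - 2)) × Fin (2 ^ (n - 2)) → Matrix (Fin (2 ^ (n - 2))) (Fin (2 ^ (n - 2))) ℂ :=
  fun p => (Dmat n) ^ (p.1 : ℕ) * (Smat n) ^ (p.2 : ℕ)

open Finset

noncomputable def Efun (c : ℕ) (m : ℤ) : ℂ := Complex.exp (2 * Real.pi * Complex.I * m / 2 ^ c)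

lemma Efun_add (c : ℕ) (m m' : ℤ) : Efun c (m + m') = Efun c m * Efun c m' := by
  rw [Efun, Efun, Efun, ← Complex.exp_add]; push_cast; ring_nf

lemma Efun_congr (c : ℕ) {m m' : ℤ} (h : m ≡ m' [ZMOD 2 ^ c]) : Efun c m = Efun c m' := by
  obtain ⟨t, ht⟩ := (Int.ModEq.dvd h.symm)
  have hm : m = m' + 2 ^ c * t := by linarith
  rw [hm, Efun_add]
  have h1 : Efun c (2 ^ c * t) = 1 := by
    rw [Efun]
    have h2 : (2 : ℂ) ^ c ≠ 0 := pow_ne_zero _ two_ne_zero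
    have : (2 * Real.pi * Complex.I * ((2:ℤ) ^ c * t : ℤ) / 2 ^ c : ℂ) = t * (2 * Real.pi * Complex.I) := by
      push_cast; field_simp
    rw [this, Complex.exp_int_mul_two_pi_mul_I]
  rw [h1, mul_one]

lemma Efun_half {c : ℕ} {x : ℤ} (hx : Odd x) : Efun (c + 1) (2 ^ c * x) = -1 := by
  obtain ⟨y, hy⟩ := hx
  have h2 : (2 : ℂ) ^ c ≠ 0 := pow_ne_zero _ two_ne_zero
  have : (2 * Real.pi * Complex.I * ((2:ℤ) ^ c * x : ℤ) / 2 ^ (c+1) : ℂ)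
      = y * (2 * Real.pi * Complex.I) + Real.pi * Complex.I := by
    rw [hy]; push_cast; field_simp; ring
  rw [Efun, this, Complex.exp_add, Complex.exp_int_mul_two_pi_mul_I, Complex.exp_pi_mul_I]
  ring

lemma Efun_pow_shift (c a : ℕ) (m : ℤ) : Efun (a + c) (2 ^ a * m) = Efun c m := by
  rw [Efun, Efun]
  congr 1
  have h2 : (2 : ℂ) ^ c ≠ 0 := pow_ne_zero _ two_ne_zero
  have h2a : (2 : ℂ) ^ a ≠ 0 := pow_ne_zero _ two_ne_zero
  push_cast
  rw [pow_add]
  field_simp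

lemma five_pow_mod (d : ℕ) : (5:ℤ) ^ (2 ^ d) ≡ 1 + 2 ^ (d + 2) [ZMOD 2 ^ (d + 3)] := by
  induction d with
  | zero => decide
  | succ d ih =>
    obtain ⟨t, ht⟩ := (Int.ModEq.dvd ih.symm)
    have h5 : (5:ℤ) ^ (2 ^ d) = 1 + 2 ^ (d + 2) + 2 ^ (d+3) * t := by linarith
    have hsq : (5:ℤ) ^ (2 ^ (d+1)) = ((5:ℤ) ^ (2 ^ d)) ^ 2 := by
      rw [← pow_mul]; ring_nf
    have key : (5:ℤ) ^ (2 ^ (d+1)) - (1 + 2 ^ (d + 3)) =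
        2 ^ (d + 4) * (t + 2 ^ d + 2 ^ (d+2) * t ^ 2 + 2 ^ (d+2) * t) := by
      rw [hsq, h5]; ring
    have hh : (2 ^ ((d+1) + 3) : ℤ) ∣ (5:ℤ) ^ (2 ^ (d+1)) - (1 + 2 ^ ((d+1) + 2)) := by
      rw [show (d+1)+3 = d+4 by ring, show (d+1)+2 = d+3 by ring, key]
      exact Dvd.intro _ rfl
    exact (Int.modEq_iff_dvd.mpr hh).symm

lemma five_pow_order (d : ℕ) : (5:ℤ) ^ (2 ^ (d + 1)) ≡ 1 [ZMOD 2 ^ (d + 3)] := by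
  have h := five_pow_mod (d + 1)
  have h2 : (2 ^ (d+3) : ℤ) ∣ 2 ^ (d + 1 + 3) := pow_dvd_pow 2 (by omega)
  have h3 : (5:ℤ) ^ (2 ^ (d+1)) ≡ 1 + 2 ^ (d + 3) [ZMOD 2 ^ (d + 3)] :=
    (h.of_dvd h2)
  calc (5:ℤ) ^ (2 ^ (d+1)) ≡ 1 + 2 ^ (d+3) [ZMOD 2 ^ (d+3)] := h3
    _ ≡ 1 + 0 [ZMOD 2 ^ (d+3)] := by
        exact Int.ModEq.add_left 1 (Int.modEq_zero_iff_dvd.mpr dvd_rfl)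
    _ = 1 := by ring

lemma sum_odd (d : ℕ) {m : ℤ} (hm : Odd m) :
    ∑ k ∈ range (2 ^ (d + 1)), Efun (d + 3) (m * 5 ^ k) = 0 := by
  have hsplit : 2 ^ (d+1) = 2 ^ d + 2 ^ d := by ring
  rw [hsplit, Finset.sum_range_add]
  have hneg : ∀ k, Efun (d+3) (m * 5 ^ (2 ^ d + k)) = - Efun (d+3) (m * 5 ^ k) := by
    intro k
    have hcong : m * 5 ^ (2 ^ d + k) ≡ m * 5 ^ k * (1 + 2 ^ (d+2)) [ZMOD 2 ^ (d+3)] := by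
      have : m * 5 ^ (2 ^ d + k) = m * 5 ^ k * 5 ^ (2 ^ d) := by rw [pow_add]; ring
      rw [this]
      exact Int.ModEq.mul_left _ (five_pow_mod d)
    rw [Efun_congr _ hcong]
    have hsplit2 : m * 5 ^ k * (1 + 2 ^ (d+2)) = m * 5 ^ k + 2 ^ (d+2) * (m * 5 ^ k) := by ring
    rw [hsplit2, Efun_add]
    have hodd : Odd (m * 5 ^ k) := hm.mul (Odd.pow (by decide))
    rw [show d + 3 = (d+2) + 1 by ring, Efun_half hodd]
    ring
  have : ∑ x ∈ range (2 ^ d), Efun (d + 3) (m * 5 ^ (2 ^ d + x))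
      = - ∑ x ∈ range (2 ^ d), Efun (d + 3) (m * 5 ^ x) := by
    rw [← Finset.sum_neg_distrib]
    exact Finset.sum_congr rfl (fun x _ => hneg x)
  rw [this]; ring

lemma sum_periodic {f : ℕ → ℂ} {P : ℕ} (hf : ∀ k, f (k + P) = f k) :
    ∀ c : ℕ, ∑ k ∈ range (c * P), f k = c * ∑ k ∈ range P, f k := by
  have hshift : ∀ c k, f (k + c * P) = f k := by
    intro c
    induction c with
    | zero => simp
    | succ c ih =>
      intro k
      have : k + (c+1) * P = (k + c * P) + P := by ring
      rw [this, hf, ih]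
  intro c
  induction c with
  | zero => simp
  | succ c ih =>
    have : (c + 1) * P = c * P + P := by ring
    rw [this, Finset.sum_range_add, ih]
    have : ∑ x ∈ range P, f (c * P + x) = ∑ x ∈ range P, f x :=
      Finset.sum_congr rfl (fun x _ => by rw [Nat.add_comm, hshift])
    rw [this]
    push_cast
    ring

lemma sum_general (n : ℕ) (hn : 3 ≤ n) {m : ℤ} (hm : ¬ (2 ^ (n - 2) : ℤ) ∣ m) :
    ∑ k ∈ range (2 ^ (n - 2)), Efun n (m * 5 ^ k) = 0 := by
  have hm0 : m ≠ 0 := by rintro rfl; exact hm (dvd_zero _)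
  have hfin : FiniteMultiplicity 2 m := Int.finiteMultiplicity_iff.mpr ⟨by norm_num, hm0⟩
  obtain ⟨m', hm', hodd2⟩ := hfin.exists_eq_pow_mul_and_not_dvd
  set a := multiplicity 2 m with ha
  have hodd : Odd m' := Int.not_even_iff_odd.mp (fun h => hodd2 h.two_dvd)
  have hale : a < n - 2 := by
    by_contra h
    push_neg at h
    exact hm (dvd_trans (pow_dvd_pow 2 h) (hm' ▸ Dvd.intro _ rfl))
  set e := n - 3 - a with he
  have hn2 : n - 2 = a + (e + 1) := by omega
  have hne : n = a + (e + 3) := by omega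
  have hper : ∀ k, Efun (e + 3) (m' * 5 ^ (k + 2 ^ (e + 1))) = Efun (e + 3) (m' * 5 ^ k) := by
    intro k
    apply Efun_congr
    have : m' * 5 ^ (k + 2 ^ (e+1)) = m' * 5 ^ k * 5 ^ (2 ^ (e+1)) := by rw [pow_add]; ring
    rw [this]
    calc m' * 5 ^ k * 5 ^ (2 ^ (e+1)) ≡ m' * 5 ^ k * 1 [ZMOD 2 ^ (e+3)] :=
        Int.ModEq.mul_left _ (five_pow_order e)
      _ = m' * 5 ^ k := by ring
  have heq : ∀ k, Efun n (m * 5 ^ k) = Efun (e + 3) (m' * 5 ^ k) := by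
    intro k
    rw [hne, hm']
    have : 2 ^ a * m' * 5 ^ k = 2 ^ a * (m' * 5 ^ k) := by ring
    rw [this, Efun_pow_shift]
  simp only [heq]
  have hrange : 2 ^ (n - 2) = 2 ^ a * 2 ^ (e + 1) := by rw [hn2, pow_add]
  rw [hrange, sum_periodic (fun k => hper k), sum_odd e hodd, mul_zero]

instance instNZ (n : ℕ) : NeZero (2 ^ (n - 2)) := ⟨by positivity⟩

lemma Smat_apply (n : ℕ) (i j : Fin (2 ^ (n - 2))) :
    Smat n i j = if i = j + 1 then 1 else 0 := rfl


open Fin.NatCast in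
lemma Smat_pow (n : ℕ) (l : ℕ) (i j : Fin (2 ^ (n - 2))) :
    (Smat n ^ l) i j = if i = j + (l : Fin (2 ^ (n - 2))) then 1 else 0 := by
  induction l generalizing i j with
  | zero => simp [Matrix.one_apply]
  | succ l ih =>
    rw [pow_succ, Matrix.mul_apply]
    simp only [ih, Smat_apply]
    rw [Finset.sum_eq_single (j + 1)]
    · rw [if_pos rfl, mul_one]
      have : j + 1 + (l : Fin (2 ^ (n - 2))) = j + ((l : ℕ) + 1 : ℕ) := by rw [Nat.cast_succ, add_assoc, add_comm 1 (l : Fin (2 ^ (n - 2)))]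
      rw [this]
    · intro b _ hb
      simp [hb]
    · simp

lemma Dmat_pow (n : ℕ) (k : ℕ) :
    Dmat n ^ k = Matrix.diagonal
      (fun j : Fin (2 ^ (n - 2)) =>
        Complex.exp (2 * Real.pi * Complex.I * 5 ^ (j : ℕ) / 2 ^ n) ^ k) := by
  rw [Dmat, Matrix.diagonal_pow]
  rfl

lemma DSfam_apply (n : ℕ) (p : Fin (2 ^ (n - 2)) × Fin (2 ^ (n - 2))) (i j : Fin (2 ^ (n - 2))) :
    DSfam n p i j = if i = j + p.2 then
      Complex.exp (2 * Real.pi * Complex.I * 5 ^ (i : ℕ) / 2 ^ n) ^ (p.1 : ℕ) else 0 := by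
  rw [DSfam, Dmat_pow, Matrix.diagonal_mul, Smat_pow, Fin.cast_val_eq_self]
  simp [ite_mul, mul_ite]

lemma exp_conj_mul (n : ℕ) (i : Fin (2 ^ (n - 2))) :
    star (Complex.exp (2 * Real.pi * Complex.I * 5 ^ (i : ℕ) / 2 ^ n)) *
      Complex.exp (2 * Real.pi * Complex.I * 5 ^ (i : ℕ) / 2 ^ n) = 1 := by
  rw [Complex.star_def, ← Complex.exp_conj, ← Complex.exp_add]
  have : (starRingEnd ℂ) (2 * Real.pi * Complex.I * 5 ^ (i : ℕ) / 2 ^ n) =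
      -(2 * Real.pi * Complex.I * 5 ^ (i : ℕ) / 2 ^ n) := by
    rw [map_div₀]
    simp only [_root_.map_mul, map_pow, map_ofNat, Complex.conj_I, Complex.conj_ofReal]
    ring
  rw [this, neg_add_cancel, Complex.exp_zero]

lemma Dmat_unitary (n : ℕ) :
    Dmat n ∈ unitary (Matrix (Fin (2 ^ (n - 2))) (Fin (2 ^ (n - 2))) ℂ) := by
  constructor
  · rw [Matrix.star_eq_conjTranspose, Dmat, Matrix.diagonal_conjTranspose,
      Matrix.diagonal_mul_diagonal]
    ext i j
    by_cases h : i = j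
    · subst h
      rw [Matrix.diagonal_apply_eq, Matrix.one_apply_eq, Pi.star_apply, exp_conj_mul]
    · rw [Matrix.diagonal_apply_ne _ h, Matrix.one_apply_ne h]
  · rw [Matrix.star_eq_conjTranspose, Dmat, Matrix.diagonal_conjTranspose,
      Matrix.diagonal_mul_diagonal]
    ext i j
    by_cases h : i = j
    · subst h
      rw [Matrix.diagonal_apply_eq, Matrix.one_apply_eq, Pi.star_apply, mul_comm, exp_conj_mul]
    · rw [Matrix.diagonal_apply_ne _ h, Matrix.one_apply_ne h]

lemma Smat_unitary (n : ℕ) :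
    Smat n ∈ unitary (Matrix (Fin (2 ^ (n - 2))) (Fin (2 ^ (n - 2))) ℂ) := by
  have hc : ∀ i j : Fin (2 ^ (n - 2)), (Smat n)ᴴ i j = if j = i + 1 then 1 else 0 := by
    intro i j
    rw [Matrix.conjTranspose_apply, Smat_apply]
    split <;> simp
  constructor
  · rw [Matrix.star_eq_conjTranspose]
    ext i j
    rw [Matrix.mul_apply]
    simp only [hc, Smat_apply]
    rw [Finset.sum_eq_single (i + 1)]
    · rw [if_pos rfl, one_mul, Matrix.one_apply]
      by_cases h : i = j
      · rw [if_pos (by rw [h]), if_pos h]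
      · rw [if_neg (fun hh => h (add_right_cancel hh)), if_neg h]
    · intro b _ hb
      rw [if_neg hb, zero_mul]
    · simp
  · rw [Matrix.star_eq_conjTranspose]
    ext i j
    rw [Matrix.mul_apply]
    simp only [hc, Smat_apply]
    rw [Finset.sum_eq_single (i - 1)]
    · rw [if_pos (by rw [sub_add_cancel]), one_mul, Matrix.one_apply]
      by_cases h : i = j
      · rw [if_pos (by rw [h, sub_add_cancel]), if_pos h]
      · rw [if_neg (fun hh => h (by rw [hh, sub_add_cancel])), if_neg h]
    · intro b _ hb
      rw [if_neg (fun h => hb (eq_sub_iff_add_eq.mpr h.symm)), zero_mul]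
    · simp

lemma DSfam_unitary (n : ℕ) (p : Fin (2 ^ (n - 2)) × Fin (2 ^ (n - 2))) :
    DSfam n p ∈ unitary (Matrix (Fin (2 ^ (n - 2))) (Fin (2 ^ (n - 2))) ℂ) :=
  mul_mem (pow_mem (Dmat_unitary n) _) (pow_mem (Smat_unitary n) _)

lemma trace_orth (n : ℕ) (hn : 3 ≤ n) (p q : Fin (2 ^ (n - 2)) × Fin (2 ^ (n - 2)))
    (hpq : p ≠ q) : Matrix.trace ((DSfam n p)ᴴ * DSfam n q) = 0 := by
  rw [Matrix.trace]
  simp only [Matrix.diag_apply, Matrix.mul_apply, Matrix.conjTranspose_apply, DSfam_apply]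
  by_cases h2 : p.2 = q.2
  · -- diagonal shift equal; then p.1 ≠ q.1
    have h1 : (p.1 : ℕ) ≠ (q.1 : ℕ) := by
      intro h
      exact hpq (Prod.ext (Fin.val_injective h) h2)
    have collapse : ∀ i : Fin (2 ^ (n - 2)),
        (∑ j, star (if j = i + p.2 then
            Complex.exp (2 * Real.pi * Complex.I * 5 ^ (j : ℕ) / 2 ^ n) ^ (p.1 : ℕ) else 0) *
          (if j = i + q.2 then
            Complex.exp (2 * Real.pi * Complex.I * 5 ^ (j : ℕ) / 2 ^ n) ^ (q.1 : ℕ) else 0))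
        = star (Complex.exp (2 * Real.pi * Complex.I * 5 ^ ((i + p.2 : Fin (2 ^ (n-2))) : ℕ) / 2 ^ n) ^ (p.1 : ℕ)) *
            Complex.exp (2 * Real.pi * Complex.I * 5 ^ ((i + p.2 : Fin (2 ^ (n-2))) : ℕ) / 2 ^ n) ^ (q.1 : ℕ) := by
      intro i
      rw [Finset.sum_eq_single (i + p.2)]
      · rw [if_pos rfl, if_pos (by rw [h2])]
      · intro b _ hb
        rw [if_neg hb, star_zero, zero_mul]
      · simp
    simp only [collapse]
    -- reindex
    rw [Fintype.sum_equiv (Equiv.addRight p.2)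
      (fun x : Fin (2 ^ (n-2)) => star (Complex.exp (2 * Real.pi * Complex.I * 5 ^ ((x + p.2 : Fin (2 ^ (n-2))) : ℕ) / 2 ^ n) ^ (p.1 : ℕ)) *
            Complex.exp (2 * Real.pi * Complex.I * 5 ^ ((x + p.2 : Fin (2 ^ (n-2))) : ℕ) / 2 ^ n) ^ (q.1 : ℕ))
      (fun j : Fin (2 ^ (n-2)) => star (Complex.exp (2 * Real.pi * Complex.I * 5 ^ (j : ℕ) / 2 ^ n) ^ (p.1 : ℕ)) *
            Complex.exp (2 * Real.pi * Complex.I * 5 ^ (j : ℕ) / 2 ^ n) ^ (q.1 : ℕ))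
      (fun x => rfl)]
    have term : ∀ j : Fin (2 ^ (n - 2)),
        star (Complex.exp (2 * Real.pi * Complex.I * 5 ^ (j : ℕ) / 2 ^ n) ^ (p.1 : ℕ)) *
            Complex.exp (2 * Real.pi * Complex.I * 5 ^ (j : ℕ) / 2 ^ n) ^ (q.1 : ℕ)
        = Efun n (((q.1 : ℕ) - (p.1 : ℕ) : ℤ) * 5 ^ (j : ℕ)) := by
      intro j
      rw [star_pow, Complex.star_def, ← Complex.exp_conj]
      have hc : (starRingEnd ℂ) (2 * Real.pi * Complex.I * 5 ^ (j : ℕ) / 2 ^ n) =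
          -(2 * Real.pi * Complex.I * 5 ^ (j : ℕ) / 2 ^ n) := by
        rw [map_div₀]
        simp only [_root_.map_mul, map_pow, map_ofNat, Complex.conj_I, Complex.conj_ofReal]
        ring
      rw [hc, ← Complex.exp_nat_mul, ← Complex.exp_nat_mul, ← Complex.exp_add, Efun]
      congr 1
      have h2n : (2 : ℂ) ^ n ≠ 0 := pow_ne_zero _ two_ne_zero
      push_cast
      field_simp
      ring
    simp only [term]
    rw [Fin.sum_univ_eq_sum_range (fun k => Efun n (((q.1 : ℕ) - (p.1 : ℕ) : ℤ) * 5 ^ k))]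
    apply sum_general n hn
    intro hdvd
    set m : ℤ := ((q.1 : ℕ) : ℤ) - ((p.1 : ℕ) : ℤ) with hm
    have hm0 : m ≠ 0 := sub_ne_zero.mpr (by exact_mod_cast h1.symm)
    have habs : |m| < 2 ^ (n - 2) := by
      have hq := q.1.isLt
      have hp := p.1.isLt
      have hcast : ((2:ℤ)) ^ (n-2) = ((2 ^ (n-2) : ℕ) : ℤ) := by push_cast; ring
      rw [abs_sub_lt_iff, hcast]
      constructor <;> (push_cast; omega)
    have hle : (2 : ℤ) ^ (n - 2) ≤ |m| :=
      Int.le_of_dvd (abs_pos.mpr hm0) ((dvd_abs _ _).mpr hdvd)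
    have : ((2 : ℤ) ^ (n - 2)) = ((2 ^ (n - 2) : ℕ) : ℤ) := by push_cast; ring
    omega
  · -- shifts differ: every term zero
    apply Finset.sum_eq_zero
    intro i _
    apply Finset.sum_eq_zero
    intro j _
    by_cases hb : j = i + p.2
    · rw [if_neg (fun hh : j = i + q.2 => h2 (by
        have := hb ▸ hh
        exact add_left_cancel (hb.symm.trans hh))), mul_zero]
    · rw [if_neg hb, star_zero, zero_mul]

theorem DSfam_is_orthogonal_unitary_basis (n : ℕ) (hn : 3 ≤ n) :
    (∀ p, DSfam n p * (DSfam n p)ᴴ = 1) ∧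
    (∀ p q, p ≠ q →
      Matrix.trace ((DSfam n p)ᴴ * DSfam n q) / ((2 ^ (n - 2) : ℕ) : ℂ) = 0) ∧
    LinearIndependent ℂ (DSfam n) ∧
    Submodule.span ℂ (Set.range (DSfam n)) =
      (⊤ : Submodule ℂ (Matrix (Fin (2 ^ (n - 2))) (Fin (2 ^ (n - 2))) ℂ)) := by
  have hNC : ((2 ^ (n - 2) : ℕ) : ℂ) ≠ 0 := Nat.cast_ne_zero.mpr (by positivity)
  have hunit : ∀ p, DSfam n p * (DSfam n p)ᴴ = 1 := fun p => by
    have h := (DSfam_unitary n p).2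
    rwa [Matrix.star_eq_conjTranspose] at h
  have hli : LinearIndependent ℂ (DSfam n) := by
    rw [Fintype.linearIndependent_iff]
    intro g hg i
    have h := congrArg (fun M => Matrix.trace ((DSfam n i)ᴴ * M)) hg
    simp only [Matrix.mul_sum, Matrix.mul_smul, Matrix.trace_sum, Matrix.trace_smul,
      Matrix.mul_zero, Matrix.trace_zero] at h
    rw [Finset.sum_eq_single i] at h
    · have hii : (DSfam n i)ᴴ * DSfam n i = 1 := by
        have h' := (DSfam_unitary n i).1
        rwa [Matrix.star_eq_conjTranspose] at h'
      rw [hii, Matrix.trace_one, smul_eq_mul] at h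
      simp only [Fintype.card_fin] at h
      exact (mul_eq_zero.mp h).resolve_right hNC
    · intro b _ hb
      rw [trace_orth n hn i b (Ne.symm hb), smul_zero]
    · simp
  refine ⟨hunit, fun p q hpq => by rw [trace_orth n hn p q hpq, zero_div], hli, ?_⟩
  apply hli.span_eq_top_of_card_eq_finrank
  rw [Module.finrank_matrix]
  simp
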